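/- Suppose Q is in rational normal form with parameters z and k_1,…,k_d, and γ is generic. Define bilinear maps α_1, α_2 on g(γ,Q) by α_1(L_m,L_n)=δ_{m+n,0}·((m_γ)^3−m_γ)/12 if m∈R and α_1(L_m,L_n)=0 if m∉R, where m_γ=(γ|m)/(γ|k_1e_1); and α_2(L_r,L_s)=δ_{r+s,0}·σ(r,−r)·(γ|r)/(γ|k_1e_1) if r∈ℤ^d∖R and α_2(L_r,L_s)=0 if r∈R. Then α_1 and α_2 are 2-cocycles on g, and no nonzero ℂ-linear combination of α_1 and α_2 is a 2-coboundary. -/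

import Mathlib

open scoped BigOperators

namespace QTorus

/-- σ(m,n) = ∏_{i<j} q_{ji}^{m_j n_i}. -/
noncomputable def qsigma (d : ℕ) (Q : Matrix (Fin d) (Fin d) ℂ) (m n : Fin d → ℤ) : ℂ :=
  ∏ i : Fin d, ∏ j : Fin d, if i < j then Q j i ^ (m j * n i) else 1

/-- The radical subgroup R = {m | σ(m,n)=σ(n,m) for all n}. -/
def Rset (d : ℕ) (Q : Matrix (Fin d) (Fin d) ℂ) : Set (Fin d → ℤ) :=
  {m | ∀ n : Fin d → ℤ, qsigma d Q m n = qsigma d Q n m}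

/-- (γ|m) = ∑ γ_i m_i. -/
noncomputable def ip (d : ℕ) (γ : Fin d → ℂ) (m : Fin d → ℤ) : ℂ :=
  ∑ i : Fin d, γ i * (m i : ℂ)

/-- The underlying vector space of g(γ,Q): formal ℂ-linear combinations of basis
vectors indexed by ℤ^d. -/
abbrev g (d : ℕ) := (Fin d → ℤ) →₀ ℂ

/-- The basis vector L_m. -/
noncomputable def L (d : ℕ) (m : Fin d → ℤ) : g d := Finsupp.single m 1

/-- Hypotheses on the matrix Q: nonzero entries, q_{ii}=1, q_{ij}q_{ji}=1. -/
def QOk (d : ℕ) (Q : Matrix (Fin d) (Fin d) ℂ) : Prop :=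
  (∀ i, Q i i = 1) ∧ (∀ i j, Q i j * Q j i = 1) ∧ (∀ i j, Q i j ≠ 0)

/-- γ is generic: γ_1,…,γ_d are linearly independent over ℚ. -/
def Generic (d : ℕ) (γ : Fin d → ℂ) : Prop := LinearIndependent ℚ γ

open Classical in
/-- Structure constants of g(γ,Q): [L_m, L_n] = sc(m,n) • L_{m+n}. -/
noncomputable def sc (d : ℕ) (Q : Matrix (Fin d) (Fin d) ℂ) (γ : Fin d → ℂ)
    (m n : Fin d → ℤ) : ℂ :=
  if m ∈ Rset d Q then
    (if n ∈ Rset d Q then qsigma d Q m n * ip d γ (n - m)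
     else qsigma d Q m n * ip d γ n)
  else
    (if n ∈ Rset d Q then -(qsigma d Q n m * ip d γ m)
     else qsigma d Q m n - qsigma d Q n m)

/-- The bracket of g(γ,Q), as the bilinear extension of
[L_m, L_n] = sc(m,n) • L_{m+n}. -/
noncomputable def br (d : ℕ) (Q : Matrix (Fin d) (Fin d) ℂ) (γ : Fin d → ℂ)
    (x y : g d) : g d :=
  x.sum fun m a => y.sum fun n b => Finsupp.single (m + n) (a * b * sc d Q γ m n)

/-- A Lie algebra automorphism of g(γ,Q): a linear equivalence preserving the bracket. -/
def IsAut (d : ℕ) (Q : Matrix (Fin d) (Fin d) ℂ) (γ : Fin d → ℂ)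
    (θ : g d ≃ₗ[ℂ] g d) : Prop :=
  ∀ x y : g d, θ (br d Q γ x y) = br d Q γ (θ x) (θ y)

/-- A derivation of g(γ,Q). -/
def IsDer (d : ℕ) (Q : Matrix (Fin d) (Fin d) ℂ) (γ : Fin d → ℂ)
    (D : g d →ₗ[ℂ] g d) : Prop :=
  ∀ x y : g d, D (br d Q γ x y) = br d Q γ (D x) y + br d Q γ x (D y)

open Classical in
/-- δ(n,R) = 1 if n ∈ R, 0 otherwise. -/
noncomputable def deltaR (d : ℕ) (Q : Matrix (Fin d) (Fin d) ℂ) (n : Fin d → ℤ) : ℕ :=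
  if n ∈ Rset d Q then 1 else 0

/-- A 2-cocycle on g(γ,Q). -/
def IsCocycle (d : ℕ) (Q : Matrix (Fin d) (Fin d) ℂ) (γ : Fin d → ℂ)
    (α : g d →ₗ[ℂ] g d →ₗ[ℂ] ℂ) : Prop :=
  (∀ x y : g d, α x y = - α y x) ∧
  (∀ x y z : g d,
    α (br d Q γ x y) z + α (br d Q γ z x) y + α (br d Q γ y z) x = 0)

/-- i ↔ j is one of the exceptional index pairs (2l-1,2l) (1-based) of the rational
normal form. Here indices are 0-based. -/
def OffDiagPair (z : ℕ) (i j : ℕ) : Prop :=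
  ∃ l : ℕ, l < z ∧ ((i = 2 * l ∧ j = 2 * l + 1) ∨ (i = 2 * l + 1 ∧ j = 2 * l))

/-- Q is in rational normal form with parameters z and k_1,…,k_d (0-based indexing:
the paper's pair (2i-1,2i) is the Lean pair (2l, 2l+1) with l = i-1). -/
def IsRNF (d : ℕ) (Q : Matrix (Fin d) (Fin d) ℂ) (z : ℕ) (k : Fin d → ℕ) : Prop :=
  0 < z ∧ 2 * z ≤ d ∧
  (∀ i j : Fin d, ¬ OffDiagPair z i.val j.val → Q i j = 1) ∧
  (∀ (l : ℕ) (_ : l < z) (hi : 2 * l < d) (hj : 2 * l + 1 < d),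
      IsPrimitiveRoot (Q ⟨2 * l, hi⟩ ⟨2 * l + 1, hj⟩) (k ⟨2 * l, hi⟩) ∧
      Q ⟨2 * l + 1, hj⟩ ⟨2 * l, hi⟩ = (Q ⟨2 * l, hi⟩ ⟨2 * l + 1, hj⟩)⁻¹ ∧
      k ⟨2 * l + 1, hj⟩ = k ⟨2 * l, hi⟩ ∧
      1 < k ⟨2 * l, hi⟩) ∧
  (∀ (i : ℕ) (_ : i + 1 < 2 * z) (h1 : i < d) (h2 : i + 1 < d),
      k ⟨i + 1, h2⟩ ∣ k ⟨i, h1⟩) ∧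
  (∀ i : Fin d, 2 * z ≤ i.val → k i = 1)

/-- The vector k_1 e_1 ∈ ℤ^d. -/
noncomputable def k1e1 (d : ℕ) (k : Fin d → ℕ) (hd : 0 < d) : Fin d → ℤ :=
  Pi.single ⟨0, hd⟩ (k ⟨0, hd⟩ : ℤ)

/-- A 2-cocycle is normalized if α(L_{m-k₁e₁}, L_{k₁e₁})=0 for m ∈ R, m ≠ 2k₁e₁,
α(L_0, L_{2k₁e₁})=0, α(L_0, L_s)=0 for s ∉ R, and α(L_m,L_n)=0 whenever m+n ≠ 0. -/
def IsNormalized (d : ℕ) (Q : Matrix (Fin d) (Fin d) ℂ) (k : Fin d → ℕ) (hd : 0 < d)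
    (α : g d →ₗ[ℂ] g d →ₗ[ℂ] ℂ) : Prop :=
  (∀ m ∈ Rset d Q, m ≠ 2 • k1e1 d k hd →
      α (L d (m - k1e1 d k hd)) (L d (k1e1 d k hd)) = 0) ∧
  α (L d 0) (L d (2 • k1e1 d k hd)) = 0 ∧
  (∀ s, s ∉ Rset d Q → α (L d 0) (L d s) = 0) ∧
  (∀ m n : Fin d → ℤ, m + n ≠ 0 → α (L d m) (L d n) = 0)

/-- The degree derivation ∂_i, acting by ∂_i(L_m) = m_i L_m. -/
noncomputable def deg (d : ℕ) (i : Fin d) (y : g d) : g d :=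
  y.sum fun m a => Finsupp.single m ((m i : ℂ) * a)

open Classical in
/-- The 2-cocycle α₁: α₁(L_m,L_n) = δ_{m+n,0}((m_γ)³-m_γ)/12 for m ∈ R, 0 otherwise,
where m_γ = (γ|m)/(γ|k₁e₁). -/
noncomputable def alpha1 (d : ℕ) (Q : Matrix (Fin d) (Fin d) ℂ) (γ : Fin d → ℂ)
    (k : Fin d → ℕ) (hd : 0 < d) (x y : g d) : ℂ :=
  x.sum fun m a => y.sum fun n b => a * b *
    (if m ∈ Rset d Q ∧ m + n = 0 then
       ((ip d γ m / ip d γ (k1e1 d k hd)) ^ 3 - ip d γ m / ip d γ (k1e1 d k hd)) / 12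
     else 0)

open Classical in
/-- The 2-cocycle α₂: α₂(L_r,L_s) = δ_{r+s,0} σ(r,-r)(γ|r)/(γ|k₁e₁) for r ∉ R,
0 otherwise. -/
noncomputable def alpha2 (d : ℕ) (Q : Matrix (Fin d) (Fin d) ℂ) (γ : Fin d → ℂ)
    (k : Fin d → ℕ) (hd : 0 < d) (x y : g d) : ℂ :=
  x.sum fun m a => y.sum fun n b => a * b *
    (if m ∉ Rset d Q ∧ m + n = 0 then
       qsigma d Q m (-m) * (ip d γ m / ip d γ (k1e1 d k hd))
     else 0)

end QTorus

open QTorus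

/-!
Both forms are supported on the antidiagonal `m + n = 0`, so the cocycle identity only has to
be checked on basis triples `(L_m, L_n, L_{-(m+n)})`, by cases on which of `m`, `n`, `m + n` lie
in the radical `R`. In rational normal form `σ(r, ·) = σ(·, r) = 1` for `r ∈ R`; so on `R` the
bracket is that of a Witt algebra and `α₁` is the Virasoro cocycle, while for the other cases
one uses that `σ(m, n) = σ(n, m)` and `σ(m, -m) = σ(n, -n)` whenever `m + n ∈ R`.

A coboundary `ψ_f` takes the value `sc(m, -m) f(L_0)` on `(L_m, L_{-m})`. Testing
`c₁α₁ + c₂α₂ = ψ_f` at `m = k₁e₁` forces `f(L_0) = 0`; then `m = 2k₁e₁` gives `c₁ = 0` and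
`m = e₁ ∉ R` gives `c₂ = 0`.
-/

theorem Finsupp.eq_zero_of_map_add₃ {α M N : Type*} [AddZeroClass M] [AddGroup N]
    {T : (α →₀ M) → (α →₀ M) → (α →₀ M) → N}
    (h₁ : ∀ x x' y w, T (x + x') y w = T x y w + T x' y w)
    (h₂ : ∀ x y y' w, T x (y + y') w = T x y w + T x y' w)
    (h₃ : ∀ x y w w', T x y (w + w') = T x y w + T x y w')
    (hT : ∀ m n p a b c, T (Finsupp.single m a) (Finsupp.single n b) (Finsupp.single p c) = 0)
    (x y w : α →₀ M) : T x y w = 0 := by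
  have ext {F : (α →₀ M) → N} (hF : ∀ u v, F (u + v) = F u + F v)
      (h : ∀ m a, F (Finsupp.single m a) = 0) (u : α →₀ M) : F u = 0 :=
    DFunLike.congr_fun (Finsupp.addHom_ext (f := AddMonoidHom.mk' F hF) (g := 0) h) u
  refine ext (F := fun u => T u y w) (h₁ · · y w) (fun m a => ?_) x
  refine ext (F := fun v => T (Finsupp.single m a) v w) (h₂ _ · · w) (fun n b => ?_) y
  exact ext (F := T (Finsupp.single m a) (Finsupp.single n b)) (h₃ _ _) (hT m n · a b ·) w

namespace QTorus

variable {d : ℕ} {Q : Matrix (Fin d) (Fin d) ℂ} {γ : Fin d → ℂ}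

lemma ip_add (m n : Fin d → ℤ) : ip d γ (m + n) = ip d γ m + ip d γ n := by
  simp [ip, mul_add, Finset.sum_add_distrib]

lemma ip_neg (m : Fin d → ℤ) : ip d γ (-m) = -ip d γ m := by
  simp [ip]

lemma ip_sub (m n : Fin d → ℤ) : ip d γ (m - n) = ip d γ m - ip d γ n := by
  rw [sub_eq_add_neg, ip_add, ip_neg, sub_eq_add_neg]

lemma ip_single (i : Fin d) (t : ℤ) : ip d γ (Pi.single i t) = γ i * t := by
  simp [ip, Pi.single_apply]

lemma qsigma_zero_left (n : Fin d → ℤ) : qsigma d Q 0 n = 1 := by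
  simp [qsigma]

lemma qsigma_zero_right (m : Fin d → ℤ) : qsigma d Q m 0 = 1 := by
  simp [qsigma]

lemma qsigma_ne_zero (hQ : QOk d Q) (m n : Fin d → ℤ) : qsigma d Q m n ≠ 0 := by
  refine Finset.prod_ne_zero_iff.2 fun i _ => Finset.prod_ne_zero_iff.2 fun j _ => ?_
  split_ifs
  exacts [zpow_ne_zero _ (hQ.2.2 j i), one_ne_zero]

lemma qsigma_add_left (hQ : QOk d Q) (m m' n : Fin d → ℤ) :
    qsigma d Q (m + m') n = qsigma d Q m n * qsigma d Q m' n := by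
  simp only [qsigma, ← Finset.prod_mul_distrib]
  refine Finset.prod_congr rfl fun i _ => Finset.prod_congr rfl fun j _ => ?_
  split_ifs
  · rw [Pi.add_apply, add_mul, zpow_add₀ (hQ.2.2 j i)]
  · rw [one_mul]

lemma qsigma_add_right (hQ : QOk d Q) (m n n' : Fin d → ℤ) :
    qsigma d Q m (n + n') = qsigma d Q m n * qsigma d Q m n' := by
  simp only [qsigma, ← Finset.prod_mul_distrib]
  refine Finset.prod_congr rfl fun i _ => Finset.prod_congr rfl fun j _ => ?_
  split_ifs
  · rw [Pi.add_apply, mul_add, zpow_add₀ (hQ.2.2 j i)]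
  · rw [one_mul]

lemma qsigma_neg_left (hQ : QOk d Q) (m n : Fin d → ℤ) :
    qsigma d Q (-m) n = (qsigma d Q m n)⁻¹ :=
  eq_inv_of_mul_eq_one_left (by rw [← qsigma_add_left hQ, neg_add_cancel, qsigma_zero_left])

lemma qsigma_neg_right (hQ : QOk d Q) (m n : Fin d → ℤ) :
    qsigma d Q m (-n) = (qsigma d Q m n)⁻¹ :=
  eq_inv_of_mul_eq_one_left (by rw [← qsigma_add_right hQ, neg_add_cancel, qsigma_zero_right])

lemma qsigma_single_left (j : Fin d) (t : ℤ) (n : Fin d → ℤ) :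
    qsigma d Q (Pi.single j t) n = ∏ i : Fin d, if i < j then Q j i ^ (t * n i) else 1 := by
  refine Finset.prod_congr rfl fun i _ => ?_
  rw [Finset.prod_eq_single_of_mem j (Finset.mem_univ j), Pi.single_eq_same]
  intro j' _ hj'
  rw [Pi.single_eq_of_ne hj', zero_mul, zpow_zero, ite_self]

lemma qsigma_single_right (m : Fin d → ℤ) (i : Fin d) (t : ℤ) :
    qsigma d Q m (Pi.single i t) = ∏ j : Fin d, if i < j then Q j i ^ (m j * t) else 1 := by
  rw [qsigma, Finset.prod_eq_single_of_mem i (Finset.mem_univ i)]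
  · simp only [Pi.single_eq_same]
  · intro i' _ hi'
    simp [Pi.single_eq_of_ne hi']

lemma qsigma_single_single (j i : Fin d) (a b : ℤ) :
    qsigma d Q (Pi.single j a) (Pi.single i b) = if i < j then Q j i ^ (a * b) else 1 := by
  rw [qsigma_single_left, Finset.prod_eq_single_of_mem i (Finset.mem_univ i)]
  · rw [Pi.single_eq_same]
  · intro i' _ hi'
    simp [Pi.single_eq_of_ne hi']

lemma qsigma_eq_prod_single_right (m x : Fin d → ℤ) :
    qsigma d Q m x = ∏ i : Fin d, qsigma d Q m (Pi.single i 1) ^ x i := by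
  refine Finset.prod_congr rfl fun i _ => ?_
  rw [qsigma_single_right, ← Finset.prod_zpow]
  refine Finset.prod_congr rfl fun j _ => ?_
  split_ifs
  · rw [mul_one, zpow_mul]
  · rw [one_zpow]

lemma add_mem_Rset (hQ : QOk d Q) {m n : Fin d → ℤ} (hm : m ∈ Rset d Q) (hn : n ∈ Rset d Q) :
    m + n ∈ Rset d Q := fun x => by
  rw [qsigma_add_left hQ, qsigma_add_right hQ, hm x, hn x]

lemma neg_mem_Rset_iff (hQ : QOk d Q) {m : Fin d → ℤ} : -m ∈ Rset d Q ↔ m ∈ Rset d Q := by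
  have neg_mem : ∀ {m}, m ∈ Rset d Q → -m ∈ Rset d Q := fun hm x => by
    rw [qsigma_neg_left hQ, qsigma_neg_right hQ, hm x]
  exact ⟨fun h => neg_neg m ▸ neg_mem h, neg_mem⟩

lemma add_mem_Rset_iff_left (hQ : QOk d Q) {m n : Fin d → ℤ} (hm : m ∈ Rset d Q) :
    m + n ∈ Rset d Q ↔ n ∈ Rset d Q := by
  refine ⟨fun h => ?_, add_mem_Rset hQ hm⟩
  simpa using add_mem_Rset hQ ((neg_mem_Rset_iff hQ).2 hm) h

lemma add_mem_Rset_iff_right (hQ : QOk d Q) {m n : Fin d → ℤ} (hn : n ∈ Rset d Q) :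
    m + n ∈ Rset d Q ↔ m ∈ Rset d Q := by
  rw [add_comm, add_mem_Rset_iff_left hQ hn]

lemma qsigma_comm_of_add_mem (hQ : QOk d Q) {m n : Fin d → ℤ} (h : m + n ∈ Rset d Q) :
    qsigma d Q m n = qsigma d Q n m := by
  have := h n
  rw [qsigma_add_left hQ, qsigma_add_right hQ] at this
  exact mul_right_cancel₀ (qsigma_ne_zero hQ n n) this

lemma sc_eq_zero_of_add_mem (hQ : QOk d Q) {m n : Fin d → ℤ} (hm : m ∉ Rset d Q)
    (hn : n ∉ Rset d Q) (h : m + n ∈ Rset d Q) : sc d Q γ m n = 0 := by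
  simp [sc, hm, hn, qsigma_comm_of_add_mem hQ h]

/-- `σ(r, x) = ∏ σ(r, e_i) ^ x_i`, and for `r ∈ R` the factor `σ(r, e_i) = σ(e_i, r)` is trivial
because one of the two products computing it has only trivial entries. -/
lemma qsigma_eq_one_of_mem_Rset
    (hQ₁ : ∀ i, (∀ j, i < j → Q j i = 1) ∨ (∀ j, j < i → Q i j = 1))
    {r : Fin d → ℤ} (hr : r ∈ Rset d Q) (x : Fin d → ℤ) : qsigma d Q r x = 1 := by
  rw [qsigma_eq_prod_single_right]
  refine Finset.prod_eq_one fun i _ => ?_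
  suffices qsigma d Q r (Pi.single i 1) = 1 by rw [this, one_zpow]
  rcases hQ₁ i with hcol | hrow
  · rw [qsigma_single_right]
    exact Finset.prod_eq_one fun j _ => ite_eq_right_iff.2 fun hij => by rw [hcol j hij, one_zpow]
  · rw [hr, qsigma_single_left]
    exact Finset.prod_eq_one fun j _ => ite_eq_right_iff.2 fun hji => by rw [hrow j hji, one_zpow]

lemma IsRNF.col_eq_one_or_row_eq_one {z : ℕ} {k : Fin d → ℕ} (hRNF : IsRNF d Q z k) (i : Fin d) :
    (∀ j, i < j → Q j i = 1) ∨ (∀ j, j < i → Q i j = 1) := by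
  have hoff := hRNF.2.2.1
  rcases Nat.even_or_odd i.val with ⟨l, hl⟩ | ⟨l, hl⟩
  · refine Or.inr fun j hji => hoff i j ?_
    rintro ⟨l', -, ⟨h1, h2⟩ | ⟨h1, h2⟩⟩ <;> rw [Fin.lt_def] at hji <;> omega
  · refine Or.inl fun j hij => hoff j i ?_
    rintro ⟨l', -, ⟨h1, h2⟩ | ⟨h1, h2⟩⟩ <;> rw [Fin.lt_def] at hij <;> omega

lemma IsRNF.qsigma_eq_one_of_mem_Rset {z : ℕ} {k : Fin d → ℕ} (hRNF : IsRNF d Q z k) :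
    ∀ r ∈ Rset d Q, ∀ x, qsigma d Q r x = 1 :=
  fun _ hr => QTorus.qsigma_eq_one_of_mem_Rset hRNF.col_eq_one_or_row_eq_one hr

lemma sc_of_mem_of_mem (hR : ∀ r ∈ Rset d Q, ∀ x, qsigma d Q r x = 1) {m n : Fin d → ℤ}
    (hm : m ∈ Rset d Q) (hn : n ∈ Rset d Q) : sc d Q γ m n = ip d γ (n - m) := by
  simp [sc, hm, hn, hR m hm n]

lemma sc_of_mem_of_not_mem (hR : ∀ r ∈ Rset d Q, ∀ x, qsigma d Q r x = 1) {m n : Fin d → ℤ}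
    (hm : m ∈ Rset d Q) (hn : n ∉ Rset d Q) : sc d Q γ m n = ip d γ n := by
  simp [sc, hm, hn, hR m hm n]

lemma sc_of_not_mem_of_mem (hR : ∀ r ∈ Rset d Q, ∀ x, qsigma d Q r x = 1) {m n : Fin d → ℤ}
    (hm : m ∉ Rset d Q) (hn : n ∈ Rset d Q) : sc d Q γ m n = -ip d γ m := by
  simp [sc, hm, hn, hR n hn m]

lemma qsigma_self_neg_eq_of_add_mem (hQ : QOk d Q) (hR : ∀ r ∈ Rset d Q, ∀ x, qsigma d Q r x = 1)
    {m n : Fin d → ℤ} (h : m + n ∈ Rset d Q) : qsigma d Q m (-m) = qsigma d Q n (-n) := by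
  have hm : qsigma d Q m m * qsigma d Q m n = 1 := by
    rw [← qsigma_add_right hQ, ← h m, hR _ h]
  have hn : qsigma d Q m n * qsigma d Q n n = 1 := by
    rw [← qsigma_add_left hQ, hR _ h]
  rw [qsigma_neg_right hQ, qsigma_neg_right hQ, ← eq_inv_of_mul_eq_one_right hm,
    eq_inv_of_mul_eq_one_left hn]

lemma qsigma_neg_self (hQ : QOk d Q) (m : Fin d → ℤ) :
    qsigma d Q (-m) m = qsigma d Q m (-m) := by
  rw [qsigma_neg_left hQ, qsigma_neg_right hQ]

noncomputable def bil (B : (Fin d → ℤ) → (Fin d → ℤ) → ℂ) (x y : g d) : ℂ :=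
  x.sum fun m a => y.sum fun n b => a * b * B m n

lemma bil_add_left (B : (Fin d → ℤ) → (Fin d → ℤ) → ℂ) (x x' y : g d) :
    bil B (x + x') y = bil B x y + bil B x' y := by
  unfold bil
  exact Finsupp.sum_add_index' (by simp) fun _ _ _ => by
    simp only [add_mul, Finsupp.sum_add]

lemma bil_add_right (B : (Fin d → ℤ) → (Fin d → ℤ) → ℂ) (x y y' : g d) :
    bil B x (y + y') = bil B x y + bil B x y' := by
  simp only [bil, ← Finsupp.sum_add]
  exact Finsupp.sum_congr fun _ _ => Finsupp.sum_add_index' (by simp) fun _ _ _ => by ring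

lemma bil_single (B : (Fin d → ℤ) → (Fin d → ℤ) → ℂ) (m n : Fin d → ℤ) (a b : ℂ) :
    bil B (Finsupp.single m a) (Finsupp.single n b) = a * b * B m n := by
  simp [bil]

lemma bil_skew {B : (Fin d → ℤ) → (Fin d → ℤ) → ℂ} (hB : ∀ m n, B m n = -B n m) (x y : g d) :
    bil B x y = -bil B y x := by
  simp only [bil, Finsupp.sum, ← Finset.sum_neg_distrib]
  rw [Finset.sum_comm]
  exact Finset.sum_congr rfl fun n _ => Finset.sum_congr rfl fun m _ => by rw [hB]; ring

lemma br_add_left (x x' y : g d) : br d Q γ (x + x') y = br d Q γ x y + br d Q γ x' y := by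
  unfold br
  exact Finsupp.sum_add_index' (by simp) fun _ _ _ => by
    simp only [add_mul, Finsupp.single_add, Finsupp.sum_add]

lemma br_add_right (x y y' : g d) : br d Q γ x (y + y') = br d Q γ x y + br d Q γ x y' := by
  simp only [br, ← Finsupp.sum_add]
  exact Finsupp.sum_congr fun _ _ => Finsupp.sum_add_index' (by simp) fun _ _ _ => by
    rw [mul_add, add_mul, Finsupp.single_add]

lemma br_single (m n : Fin d → ℤ) (a b : ℂ) :
    br d Q γ (Finsupp.single m a) (Finsupp.single n b) =
      Finsupp.single (m + n) (a * b * sc d Q γ m n) := by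
  simp [br]

lemma bil_cocycle {B : (Fin d → ℤ) → (Fin d → ℤ) → ℂ}
    (hB : ∀ m n p, sc d Q γ m n * B (m + n) p + sc d Q γ p m * B (p + m) n +
      sc d Q γ n p * B (n + p) m = 0) (x y w : g d) :
    bil B (br d Q γ x y) w + bil B (br d Q γ w x) y + bil B (br d Q γ y w) x = 0 := by
  refine Finsupp.eq_zero_of_map_add₃ (T := fun x y w =>
    bil B (br d Q γ x y) w + bil B (br d Q γ w x) y + bil B (br d Q γ y w) x)
    (fun _ _ _ _ => ?_) (fun _ _ _ _ => ?_) (fun _ _ _ _ => ?_) (fun m n p a b c => ?_) x y w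
  iterate 3
    simp only [br_add_left, br_add_right, bil_add_left, bil_add_right]; ring
  simp only [br_single, bil_single]
  linear_combination a * b * c * hB m n p

noncomputable def antidiag (f : (Fin d → ℤ) → ℂ) (m n : Fin d → ℤ) : ℂ :=
  if m + n = 0 then f m else 0

lemma antidiag_skew {f : (Fin d → ℤ) → ℂ} (hf : ∀ m, f (-m) = -f m) (m n : Fin d → ℤ) :
    antidiag f m n = -antidiag f n m := by
  by_cases h : m + n = 0
  · obtain rfl := eq_neg_of_add_eq_zero_right h
    simp [antidiag, hf]
  · simp [antidiag, h, add_comm n m]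

lemma antidiag_cocycle {f : (Fin d → ℤ) → ℂ}
    (hf : ∀ m n, sc d Q γ m n * f (m + n) + sc d Q γ (-(m + n)) m * f (-n) +
      sc d Q γ n (-(m + n)) * f (-m) = 0) (m n p : Fin d → ℤ) :
    sc d Q γ m n * antidiag f (m + n) p + sc d Q γ p m * antidiag f (p + m) n +
      sc d Q γ n p * antidiag f (n + p) m = 0 := by
  by_cases h : m + n + p = 0
  · obtain rfl := eq_neg_of_add_eq_zero_right h
    rw [show -(m + n) + m = -n by abel, show n + -(m + n) = -m by abel]
    simpa [antidiag] using hf m n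
  · have h₂ : p + m + n ≠ 0 := by rwa [show p + m + n = m + n + p by abel]
    have h₃ : n + p + m ≠ 0 := by rwa [show n + p + m = m + n + p by abel]
    simp [antidiag, h, h₂, h₃]

variable (Q γ) in
open Classical in
/-- `m ↦ α₁(L_m, L_{-m})`, with the normalizing constant `(γ|k₁e₁)` generalized to any `c`. -/
noncomputable def alpha1Diag (c : ℂ) (m : Fin d → ℤ) : ℂ :=
  if m ∈ Rset d Q then ((ip d γ m / c) ^ 3 - ip d γ m / c) / 12 else 0

variable (Q γ) in
open Classical in
noncomputable def alpha2Diag (c : ℂ) (m : Fin d → ℤ) : ℂ :=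
  if m ∉ Rset d Q then qsigma d Q m (-m) * (ip d γ m / c) else 0

lemma alpha1_eq_bil (k : Fin d → ℕ) (hd : 0 < d) :
    alpha1 d Q γ k hd = bil (antidiag (alpha1Diag Q γ (ip d γ (k1e1 d k hd)))) := by
  ext x y
  refine Finsupp.sum_congr fun m _ => Finsupp.sum_congr fun n _ => ?_
  simp only [antidiag, alpha1Diag]
  split_ifs <;> simp_all

lemma alpha2_eq_bil (k : Fin d → ℕ) (hd : 0 < d) :
    alpha2 d Q γ k hd = bil (antidiag (alpha2Diag Q γ (ip d γ (k1e1 d k hd)))) := by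
  ext x y
  refine Finsupp.sum_congr fun m _ => Finsupp.sum_congr fun n _ => ?_
  simp only [antidiag, alpha2Diag]
  split_ifs <;> simp_all

lemma alpha1Diag_neg (hQ : QOk d Q) (c : ℂ) (m : Fin d → ℤ) :
    alpha1Diag Q γ c (-m) = -alpha1Diag Q γ c m := by
  by_cases hm : m ∈ Rset d Q
  · simp only [alpha1Diag, neg_mem_Rset_iff hQ, hm, if_true, ip_neg]
    ring
  · simp [alpha1Diag, neg_mem_Rset_iff hQ, hm]

lemma alpha2Diag_neg (hQ : QOk d Q) (c : ℂ) (m : Fin d → ℤ) :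
    alpha2Diag Q γ c (-m) = -alpha2Diag Q γ c m := by
  by_cases hm : m ∈ Rset d Q
  · simp [alpha2Diag, neg_mem_Rset_iff hQ, hm]
  · simp only [alpha2Diag, neg_mem_Rset_iff hQ, hm, not_false_eq_true, if_true, ip_neg,
      neg_neg, qsigma_neg_self hQ]
    ring

lemma alpha1Diag_cocycle (hQ : QOk d Q) (hR : ∀ r ∈ Rset d Q, ∀ x, qsigma d Q r x = 1)
    (c : ℂ) (m n : Fin d → ℤ) :
    sc d Q γ m n * alpha1Diag Q γ c (m + n) + sc d Q γ (-(m + n)) m * alpha1Diag Q γ c (-n) +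
      sc d Q γ n (-(m + n)) * alpha1Diag Q γ c (-m) = 0 := by
  have hp : -(m + n) ∈ Rset d Q ↔ m + n ∈ Rset d Q := neg_mem_Rset_iff hQ
  by_cases hm : m ∈ Rset d Q <;> by_cases hn : n ∈ Rset d Q
  · have hmn := add_mem_Rset hQ hm hn
    simp only [alpha1Diag, neg_mem_Rset_iff hQ, hm, hn, hmn, if_true,
      sc_of_mem_of_mem hR hm hn, sc_of_mem_of_mem hR (hp.2 hmn) hm,
      sc_of_mem_of_mem hR hn (hp.2 hmn), ip_sub, ip_add, ip_neg]
    ring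
  · have hmn : m + n ∉ Rset d Q := (add_mem_Rset_iff_left hQ hm).not.2 hn
    rw [sc_eq_zero_of_add_mem hQ hn (hp.not.2 hmn) (by simpa using (neg_mem_Rset_iff hQ).2 hm)]
    simp [alpha1Diag, neg_mem_Rset_iff hQ, hn, hmn]
  · have hmn : m + n ∉ Rset d Q := (add_mem_Rset_iff_right hQ hn).not.2 hm
    rw [sc_eq_zero_of_add_mem hQ (hp.not.2 hmn) hm (by simpa using (neg_mem_Rset_iff hQ).2 hn)]
    simp [alpha1Diag, neg_mem_Rset_iff hQ, hm, hmn]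
  · by_cases hmn : m + n ∈ Rset d Q
    · simp [alpha1Diag, neg_mem_Rset_iff hQ, hm, hn, sc_eq_zero_of_add_mem hQ hm hn hmn]
    · simp [alpha1Diag, neg_mem_Rset_iff hQ, hm, hn, hmn]

lemma alpha2Diag_cocycle (hQ : QOk d Q) (hR : ∀ r ∈ Rset d Q, ∀ x, qsigma d Q r x = 1)
    (c : ℂ) (m n : Fin d → ℤ) :
    sc d Q γ m n * alpha2Diag Q γ c (m + n) + sc d Q γ (-(m + n)) m * alpha2Diag Q γ c (-n) +
      sc d Q γ n (-(m + n)) * alpha2Diag Q γ c (-m) = 0 := by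
  have hp : -(m + n) ∈ Rset d Q ↔ m + n ∈ Rset d Q := neg_mem_Rset_iff hQ
  by_cases hm : m ∈ Rset d Q <;> by_cases hn : n ∈ Rset d Q
  · simp [alpha2Diag, neg_mem_Rset_iff hQ, hm, hn, add_mem_Rset hQ hm hn]
  · have hmn : m + n ∉ Rset d Q := (add_mem_Rset_iff_left hQ hm).not.2 hn
    have hτ := qsigma_self_neg_eq_of_add_mem hQ hR (m := m + n) (n := -n) (by simpa using hm)
    simp only [alpha2Diag, neg_mem_Rset_iff hQ, hm, hn, hmn, not_false_eq_true, not_true_eq_false,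
      if_true, if_false, sc_of_mem_of_not_mem hR hm hn, sc_of_not_mem_of_mem hR (hp.not.2 hmn) hm,
      hτ, ip_add, ip_neg]
    ring
  · have hmn : m + n ∉ Rset d Q := (add_mem_Rset_iff_right hQ hn).not.2 hm
    have hτ := qsigma_self_neg_eq_of_add_mem hQ hR (m := m + n) (n := -m) (by simpa using hn)
    simp only [alpha2Diag, neg_mem_Rset_iff hQ, hm, hn, hmn, not_false_eq_true, not_true_eq_false,
      if_true, if_false, sc_of_not_mem_of_mem hR hm hn, sc_of_mem_of_not_mem hR hn (hp.not.2 hmn),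
      hτ, ip_add, ip_neg]
    ring
  · by_cases hmn : m + n ∈ Rset d Q
    · have hτ := qsigma_self_neg_eq_of_add_mem hQ hR (m := -n) (n := -m)
        (by simpa [add_comm] using (neg_mem_Rset_iff hQ).2 hmn)
      simp only [alpha2Diag, neg_mem_Rset_iff hQ, hm, hn, hmn, not_false_eq_true,
        not_true_eq_false, if_true, if_false, sc_of_mem_of_not_mem hR (hp.2 hmn) hm,
        sc_of_not_mem_of_mem hR hn (hp.2 hmn), hτ, ip_neg]
      ring
    · have := qsigma_ne_zero hQ m m
      have := qsigma_ne_zero hQ n n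
      have := qsigma_ne_zero hQ m n
      have := qsigma_ne_zero hQ n m
      simp only [alpha2Diag, sc, neg_mem_Rset_iff hQ, hm, hn, hmn, not_false_eq_true, if_true,
        if_false, qsigma_neg_left hQ, qsigma_neg_right hQ, qsigma_add_left hQ, qsigma_add_right hQ,
        neg_neg, ip_add, ip_neg]
      field_simp
      ring

theorem alpha1_skew (hQ : QOk d Q) (k : Fin d → ℕ) (hd : 0 < d) (x y : g d) :
    alpha1 d Q γ k hd x y = -alpha1 d Q γ k hd y x := by
  rw [alpha1_eq_bil]
  exact bil_skew (antidiag_skew (alpha1Diag_neg hQ _)) x y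

theorem alpha2_skew (hQ : QOk d Q) (k : Fin d → ℕ) (hd : 0 < d) (x y : g d) :
    alpha2 d Q γ k hd x y = -alpha2 d Q γ k hd y x := by
  rw [alpha2_eq_bil]
  exact bil_skew (antidiag_skew (alpha2Diag_neg hQ _)) x y

theorem alpha1_cocycle (hQ : QOk d Q) (hR : ∀ r ∈ Rset d Q, ∀ x, qsigma d Q r x = 1)
    (k : Fin d → ℕ) (hd : 0 < d) (x y w : g d) :
    alpha1 d Q γ k hd (br d Q γ x y) w + alpha1 d Q γ k hd (br d Q γ w x) y +
      alpha1 d Q γ k hd (br d Q γ y w) x = 0 := by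
  rw [alpha1_eq_bil]
  exact bil_cocycle (antidiag_cocycle (alpha1Diag_cocycle hQ hR _)) x y w

theorem alpha2_cocycle (hQ : QOk d Q) (hR : ∀ r ∈ Rset d Q, ∀ x, qsigma d Q r x = 1)
    (k : Fin d → ℕ) (hd : 0 < d) (x y w : g d) :
    alpha2 d Q γ k hd (br d Q γ x y) w + alpha2 d Q γ k hd (br d Q γ w x) y +
      alpha2 d Q γ k hd (br d Q γ y w) x = 0 := by
  rw [alpha2_eq_bil]
  exact bil_cocycle (antidiag_cocycle (alpha2Diag_cocycle hQ hR _)) x y w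

lemma diag_eq_of_coboundary {k : Fin d → ℕ} {hd : 0 < d} {c₁ c₂ : ℂ} {f : g d →ₗ[ℂ] ℂ}
    (hf : ∀ x y : g d, c₁ * alpha1 d Q γ k hd x y + c₂ * alpha2 d Q γ k hd x y = f (br d Q γ x y))
    (m : Fin d → ℤ) :
    c₁ * alpha1Diag Q γ (ip d γ (k1e1 d k hd)) m + c₂ * alpha2Diag Q γ (ip d γ (k1e1 d k hd)) m =
      sc d Q γ m (-m) * f (L d 0) := by
  have h := hf (L d m) (L d (-m))
  rw [alpha1_eq_bil, alpha2_eq_bil, L, L, bil_single, bil_single, br_single,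
    ← Finsupp.smul_single_one, map_smul, add_neg_cancel] at h
  simpa [antidiag, L] using h

section NormalForm

variable {z : ℕ} {k : Fin d → ℕ} (hd : 0 < d)

lemma IsRNF.one_lt (hRNF : IsRNF d Q z k) : 1 < d := by
  have := hRNF.1
  have := hRNF.2.1
  omega

lemma IsRNF.isPrimitiveRoot_one_zero (hRNF : IsRNF d Q z k) :
    IsPrimitiveRoot (Q ⟨1, hRNF.one_lt⟩ ⟨0, hd⟩) (k ⟨0, hd⟩) := by
  obtain ⟨hprim, hinv, -, -⟩ := hRNF.2.2.2.1 0 hRNF.1 hd hRNF.one_lt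
  rw [hinv]
  exact hprim.inv

lemma IsRNF.one_lt_k_zero (hRNF : IsRNF d Q z k) : 1 < k ⟨0, hd⟩ :=
  (hRNF.2.2.2.1 0 hRNF.1 hd hRNF.one_lt).2.2.2

lemma IsRNF.k1e1_mem_Rset (hRNF : IsRNF d Q z k) : k1e1 d k hd ∈ Rset d Q := by
  intro x
  rw [k1e1, qsigma_single_left, qsigma_single_right,
    Finset.prod_eq_one fun i _ => if_neg (Nat.not_lt_zero i.val)]
  refine (Finset.prod_eq_one fun j _ => ite_eq_right_iff.2 fun h0j => ?_).symm
  by_cases hj : j = ⟨1, hRNF.one_lt⟩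
  · rw [hj, mul_comm, zpow_mul, zpow_natCast, (hRNF.isPrimitiveRoot_one_zero hd).pow_eq_one,
      one_zpow]
  · rw [hRNF.2.2.1 j ⟨0, hd⟩, one_zpow]
    rintro ⟨l, -, ⟨h1, h2⟩ | ⟨h1, h2⟩⟩
    · omega
    · exact hj (Fin.ext (by simp only at h2 ⊢; omega))

lemma IsRNF.single_zero_not_mem_Rset (hRNF : IsRNF d Q z k) :
    Pi.single (⟨0, hd⟩ : Fin d) (1 : ℤ) ∉ Rset d Q := fun h => by
  have := h (Pi.single ⟨1, hRNF.one_lt⟩ 1)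
  rw [qsigma_single_single, qsigma_single_single, if_neg (by simp [Fin.lt_def]),
    if_pos (by simp [Fin.lt_def]), mul_one, zpow_one] at this
  exact (hRNF.isPrimitiveRoot_one_zero hd).ne_one (hRNF.one_lt_k_zero hd) this.symm

lemma IsRNF.ip_k1e1_ne_zero (hRNF : IsRNF d Q z k) (hγ : Generic d γ) :
    ip d γ (k1e1 d k hd) ≠ 0 := by
  have := hRNF.one_lt_k_zero hd
  rw [k1e1, ip_single]
  exact mul_ne_zero (hγ.ne_zero _) (by exact_mod_cast (show (k ⟨0, hd⟩ : ℤ) ≠ 0 by omega))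

end NormalForm

lemma IsRNF.eq_zero_of_diag_eq_sc_mul {z : ℕ} {k : Fin d → ℕ} (hRNF : IsRNF d Q z k)
    (hQ : QOk d Q) (hd : 0 < d) (hγ : Generic d γ) {c₁ c₂ F : ℂ}
    (hdiag : ∀ m, c₁ * alpha1Diag Q γ (ip d γ (k1e1 d k hd)) m +
      c₂ * alpha2Diag Q γ (ip d γ (k1e1 d k hd)) m = sc d Q γ m (-m) * F) :
    c₁ = 0 ∧ c₂ = 0 := by
  have hR := hRNF.qsigma_eq_one_of_mem_Rset
  set u := k1e1 d k hd
  have hu : u ∈ Rset d Q := hRNF.k1e1_mem_Rset hd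
  have hc : ip d γ u ≠ 0 := hRNF.ip_k1e1_ne_zero hd hγ
  -- `[L_u, L_{-u}]` is a nonzero multiple of `L_0`, while both forms vanish on `(L_u, L_{-u})`.
  have hF : F = 0 := by
    have h := hdiag u
    simp only [alpha1Diag, alpha2Diag, hu, div_self hc, if_true, not_true_eq_false, if_false,
      sc_of_mem_of_mem hR hu ((neg_mem_Rset_iff hQ).2 hu), ip_sub, ip_neg] at h
    have h' : (-2 * ip d γ u) * F = 0 := by linear_combination -h
    exact (mul_eq_zero.1 h').resolve_left (by simpa using hc)
  refine ⟨?_, ?_⟩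
  · have h := hdiag (u + u)
    simp only [alpha1Diag, alpha2Diag, add_mem_Rset hQ hu hu, if_true, not_true_eq_false, if_false,
      hF, ip_add, show (ip d γ u + ip d γ u) / ip d γ u = 2 by field_simp; ring] at h
    linear_combination 2 * h
  · have h := hdiag (Pi.single ⟨0, hd⟩ 1)
    simp only [alpha1Diag, alpha2Diag, hRNF.single_zero_not_mem_Rset hd, if_false,
      not_false_eq_true, if_true, hF, ip_single] at h
    simpa [qsigma_ne_zero hQ, hγ.ne_zero, hc] using h

end QTorus

theorem stmt18_general (d : ℕ) (hd : 0 < d)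
    (Q : Matrix (Fin d) (Fin d) ℂ) (hQ : QOk d Q)
    (z : ℕ) (k : Fin d → ℕ) (hRNF : IsRNF d Q z k)
    (γ : Fin d → ℂ) (hγ : Generic d γ) :
    (∀ x y : g d, alpha1 d Q γ k hd x y = - alpha1 d Q γ k hd y x) ∧
    (∀ x y z' : g d,
      alpha1 d Q γ k hd (br d Q γ x y) z' + alpha1 d Q γ k hd (br d Q γ z' x) y +
        alpha1 d Q γ k hd (br d Q γ y z') x = 0) ∧
    (∀ x y : g d, alpha2 d Q γ k hd x y = - alpha2 d Q γ k hd y x) ∧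
    (∀ x y z' : g d,
      alpha2 d Q γ k hd (br d Q γ x y) z' + alpha2 d Q γ k hd (br d Q γ z' x) y +
        alpha2 d Q γ k hd (br d Q γ y z') x = 0) ∧
    (∀ c₁ c₂ : ℂ,
      (∃ f : g d →ₗ[ℂ] ℂ, ∀ x y : g d,
        c₁ * alpha1 d Q γ k hd x y + c₂ * alpha2 d Q γ k hd x y =
          f (br d Q γ x y)) →
      c₁ = 0 ∧ c₂ = 0) := by
  have hR := hRNF.qsigma_eq_one_of_mem_Rset
  refine ⟨alpha1_skew hQ k hd, alpha1_cocycle hQ hR k hd, alpha2_skew hQ k hd,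
    alpha2_cocycle hQ hR k hd, ?_⟩
  rintro c₁ c₂ ⟨f, hf⟩
  exact hRNF.eq_zero_of_diag_eq_sc_mul hQ hd hγ (diag_eq_of_coboundary hf)

/-- for Q in rational normal form and γ generic, the bilinear maps α₁
and α₂ are 2-cocycles on g(γ,Q), and no nonzero linear combination of α₁ and α₂ is
a 2-coboundary. -/
theorem stmt18 (d : ℕ) (hd1 : 1 < d) (hd : 0 < d)
    (Q : Matrix (Fin d) (Fin d) ℂ) (hQ : QOk d Q)
    (z : ℕ) (k : Fin d → ℕ) (hRNF : IsRNF d Q z k)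
    (γ : Fin d → ℂ) (hγ : Generic d γ) :
    (∀ x y : g d, alpha1 d Q γ k hd x y = - alpha1 d Q γ k hd y x) ∧
    (∀ x y z' : g d,
      alpha1 d Q γ k hd (br d Q γ x y) z' + alpha1 d Q γ k hd (br d Q γ z' x) y +
        alpha1 d Q γ k hd (br d Q γ y z') x = 0) ∧
    (∀ x y : g d, alpha2 d Q γ k hd x y = - alpha2 d Q γ k hd y x) ∧
    (∀ x y z' : g d,
      alpha2 d Q γ k hd (br d Q γ x y) z' + alpha2 d Q γ k hd (br d Q γ z' x) y +
        alpha2 d Q γ k hd (br d Q γ y z') x = 0) ∧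
    (∀ c₁ c₂ : ℂ,
      (∃ f : g d →ₗ[ℂ] ℂ, ∀ x y : g d,
        c₁ * alpha1 d Q γ k hd x y + c₂ * alpha2 d Q γ k hd x y =
          f (br d Q γ x y)) →
      c₁ = 0 ∧ c₂ = 0) :=
  stmt18_general d hd Q hQ z k hRNF γ hγ
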